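/- arXiv:1805.02891 — 3 statements merged into one kernel-verified Lean document; each statement's English description precedes it below -/
import Mathlib

section
/- For the odd derivation D = ∂_θ + θ∂_z and the even operator T = −Σ_{j<0}(A_j 𝓛_j + M_{j+1/2} 𝓖_{j+1/2}) with A_j even and M_{j+1/2} odd Grassmann coefficients, the commutator [D, T] equals h(z,θ)·D, where h(z,θ) = Σ_{j<0}( A_j ((j+1)/2) z^j + θ M_{j+1/2}(j+1)z^j ). -/
/- Superfunctions F(z,θ) = f(z) + θ g(z) with Grassmann coefficients are encoded as
pairs (f, g) over R = ⋀[z^{±1}]. With D = ∂_θ + θ∂_z encoded by D(f,g) = (g, f'),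
𝓛_j, 𝓖_{j+1/2} as in the N=1 superconformal algebra, A_j even and M_{j+1/2} odd
Grassmann coefficients (finitely many, indexed by j ∈ s ⊆ ℤ_{<0}), and
T = −Σ_j (A_j 𝓛_j + M_{j+1/2} 𝓖_{j+1/2}), the commutator satisfies
[D,T] = h(z,θ)·D with h = Σ_j (A_j ((j+1)/2) z^j + θ M_{j+1/2} (j+1) z^j);
acting on D(f,g) = (g,f'), multiplication by h = h₀ + θh₁ gives (h₀g, h₀f' + h₁g). -/

/-! The operator `T` is a sum of terms `A_j 𝓛_j + M_{j+1/2} 𝓖_{j+1/2}`, so it suffices to compute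
the commutator with `D` term by term. Writing a superfunction as `f + θ g`, each term is a
first-order operator built from multiplications by monomials `z^k`, and the Leibniz rule for
`∂_z` shows that its commutator with `D` is multiplication by
`A_j ((j+1)/2) z^j + θ M_{j+1/2} (j+1) z^j` composed with `D`. -/

noncomputable section

abbrev Grass := ExteriorAlgebra ℂ (ℕ →₀ ℂ)
abbrev GLP := AddMonoidAlgebra Grass ℤ

def glpder (f : GLP) : GLP := f.coeff.sum fun n a => AddMonoidAlgebra.single (n - 1) ((n : ℤ) • a)

def gsingle (k : ℤ) (a : Grass) : GLP := AddMonoidAlgebra.single k a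

/-- D = ∂_θ + θ∂_z on (f,g) ↔ f + θg. -/
def Dop (F : GLP × GLP) : GLP × GLP := (F.2, glpder F.1)

/-- 𝓛_j on (f,g). -/
def Lop (j : ℤ) (F : GLP × GLP) : GLP × GLP :=
  (-(gsingle (j + 1) 1 * glpder F.1),
   -(gsingle (j + 1) 1 * glpder F.2) - (((j : ℂ) + 1) / 2) • (gsingle j 1 * F.2))

/-- 𝓖_{j+1/2} on (f,g). -/
def Gop (j : ℤ) (F : GLP × GLP) : GLP × GLP :=
  (-(gsingle (j + 1) 1 * F.2), gsingle (j + 1) 1 * glpder F.1)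

/-- T = −Σ_j (A_j 𝓛_j + M_{j+1/2} 𝓖_{j+1/2}); since M is odd, M·(u + θv) = Mu − θMv,
so the 𝓖-term acts by (M·(𝓖F)₁, −M·(𝓖F)₂), with M· given by left multiplication. -/
def Tsc (s : Finset ℤ) (A M : ℤ → Grass) (F : GLP × GLP) : GLP × GLP :=
  -(∑ j ∈ s,
    ((gsingle 0 (A j) * (Lop j F).1 + gsingle 0 (M j) * (Gop j F).1,
      gsingle 0 (A j) * (Lop j F).2 - gsingle 0 (M j) * (Gop j F).2) : GLP × GLP))

lemma gsingle_mul (k l : ℤ) (a b : Grass) :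
    gsingle k a * gsingle l b = gsingle (k + l) (a * b) :=
  AddMonoidAlgebra.single_mul_single ..

lemma gsingle_add (k : ℤ) (a b : Grass) : gsingle k (a + b) = gsingle k a + gsingle k b :=
  AddMonoidAlgebra.single_add k a b

lemma gsingle_smul (k : ℤ) (c : ℂ) (a : Grass) : gsingle k (c • a) = c • gsingle k a :=
  (AddMonoidAlgebra.smul_single c k a).symm

lemma gsingle_zero_mul_gsingle_one_mul (k : ℤ) (a : Grass) (u : GLP) :
    gsingle 0 a * (gsingle k 1 * u) = gsingle k a * u := by
  rw [← mul_assoc, gsingle_mul, zero_add, mul_one]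

lemma glpder_gsingle (k : ℤ) (a : Grass) : glpder (gsingle k a) = gsingle (k - 1) (k • a) :=
  Finsupp.sum_single_index (by simp)

lemma glpder_zero : glpder 0 = 0 := by simp [glpder]

lemma glpder_add (f g : GLP) : glpder (f + g) = glpder f + glpder g := by
  unfold glpder
  rw [AddMonoidAlgebra.coeff_add]
  exact Finsupp.sum_add_index' (by simp) (by simp)

def glpderHom : GLP →+ GLP where
  toFun := glpder
  map_zero' := glpder_zero
  map_add' := glpder_add

lemma glpder_gsingle_mul_gsingle (k n : ℤ) (a b : Grass) :
    glpder (gsingle k a * gsingle n b) =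
      glpder (gsingle k a) * gsingle n b + gsingle k a * glpder (gsingle n b) := by
  rw [gsingle_mul, glpder_gsingle, glpder_gsingle, glpder_gsingle, gsingle_mul, gsingle_mul,
    show k - 1 + n = k + n - 1 by ring, show k + (n - 1) = k + n - 1 by ring, ← gsingle_add,
    add_smul, smul_mul_assoc, mul_smul_comm]

lemma glpder_mul (f g : GLP) : glpder (f * g) = glpder f * g + f * glpder g := by
  induction f using AddMonoidAlgebra.induction_linear with
  | zero => rw [zero_mul, glpder_zero, zero_mul, zero_mul, zero_add]
  | add f₁ f₂ h₁ h₂ =>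
    rw [add_mul, glpder_add, h₁, h₂, glpder_add, add_mul, add_mul]
    abel
  | single k a =>
    induction g using AddMonoidAlgebra.induction_linear with
    | zero => rw [mul_zero, glpder_zero, mul_zero, mul_zero, add_zero]
    | add g₁ g₂ h₁ h₂ =>
      rw [mul_add, glpder_add, h₁, h₂, glpder_add, mul_add, mul_add]
      abel
    | single n b => exact glpder_gsingle_mul_gsingle k n a b

lemma glpder_neg (f : GLP) : glpder (-f) = -glpder f := map_neg glpderHom f

lemma glpder_sub (f g : GLP) : glpder (f - g) = glpder f - glpder g := map_sub glpderHom f g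

lemma glpder_gsingle_succ (j : ℤ) (a : Grass) :
    glpder (gsingle (j + 1) a) = ((j : ℂ) + 1) • gsingle j a := by
  rw [glpder_gsingle, add_sub_cancel_right, ← gsingle_smul, ← Int.cast_smul_eq_zsmul ℂ]
  push_cast
  rfl

def dopHom : GLP × GLP →+ GLP × GLP :=
  (AddMonoidHom.snd GLP GLP).prod (glpderHom.comp (AddMonoidHom.fst GLP GLP))

lemma coe_dopHom : ⇑dopHom = Dop := rfl

/-- Multiplication of a superfunction by the even superfunction `h.1 + θ h.2`. -/
def superMul (h F : GLP × GLP) : GLP × GLP := (h.1 * F.1, h.1 * F.2 + h.2 * F.1)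

lemma superMul_sum (s : Finset ℤ) (h₀ h₁ : ℤ → GLP) (F : GLP × GLP) :
    superMul (∑ j ∈ s, h₀ j, ∑ j ∈ s, h₁ j) F = ∑ j ∈ s, superMul (h₀ j, h₁ j) F := by
  refine Prod.ext ?_ ?_ <;>
    simp only [superMul, Prod.fst_sum, Prod.snd_sum, Finset.sum_mul, Finset.sum_add_distrib]

def tscTerm (j : ℤ) (a m : Grass) (F : GLP × GLP) : GLP × GLP :=
  (gsingle 0 a * (Lop j F).1 + gsingle 0 m * (Gop j F).1,
    gsingle 0 a * (Lop j F).2 - gsingle 0 m * (Gop j F).2)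

lemma Tsc_eq_neg_sum (s : Finset ℤ) (A M : ℤ → Grass) (F : GLP × GLP) :
    Tsc s A M F = -∑ j ∈ s, tscTerm j (A j) (M j) F := rfl

lemma tscTerm_eq (j : ℤ) (a m : Grass) (F : GLP × GLP) :
    tscTerm j a m F =
      (-(gsingle (j + 1) a * glpder F.1) - gsingle (j + 1) m * F.2,
        -(gsingle (j + 1) a * glpder F.2) - (((j : ℂ) + 1) / 2) • (gsingle j a * F.2)
          - gsingle (j + 1) m * glpder F.1) := by
  simp only [tscTerm, Lop, Gop, sub_eq_add_neg, mul_add, mul_neg, mul_smul_comm,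
    gsingle_zero_mul_gsingle_one_mul]

lemma tscTerm_Dop_sub_Dop_tscTerm (j : ℤ) (a m : Grass) (F : GLP × GLP) :
    tscTerm j a m (Dop F) - Dop (tscTerm j a m F) =
      superMul ((((j : ℂ) + 1) / 2) • gsingle j a, ((j : ℂ) + 1) • gsingle j m) (Dop F) := by
  obtain ⟨f, g⟩ := F
  -- the weight `(j+1)/2` of `𝓛_j` on the `θ`-part and the `j+1` from `∂_z z^(j+1)` leave `(j+1)/2`
  simp only [tscTerm_eq, Dop, superMul, glpder_sub, glpder_neg, glpder_mul, glpder_gsingle_succ,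
    smul_mul_assoc]
  refine Prod.ext ?_ ?_ <;> simp only [Prod.fst_sub, Prod.snd_sub] <;> module

theorem commutator_D_T_eq_h_D_general
    (s : Finset ℤ)
    (A M : ℤ → Grass)
    (h0 h1 : GLP)
    (hh0 : h0 = ∑ j ∈ s, (((j : ℂ) + 1) / 2) • gsingle j (A j))
    (hh1 : h1 = ∑ j ∈ s, ((j : ℂ) + 1) • gsingle j (M j)) :
    ∀ F : GLP × GLP,
      Dop (Tsc s A M F) - Tsc s A M (Dop F)
        = (h0 * F.2, h0 * glpder F.1 + h1 * F.2) := by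
  intro F
  calc Dop (Tsc s A M F) - Tsc s A M (Dop F)
      = ∑ j ∈ s, (tscTerm j (A j) (M j) (Dop F) - Dop (tscTerm j (A j) (M j) F)) := by
        rw [Tsc_eq_neg_sum, Tsc_eq_neg_sum, Finset.sum_sub_distrib, ← coe_dopHom, map_neg,
          map_sum, sub_neg_eq_add, neg_add_eq_sub]
    _ = superMul (h0, h1) (Dop F) := by
        simp only [tscTerm_Dop_sub_Dop_tscTerm, superMul_sum, hh0, hh1]

theorem commutator_D_T_eq_h_D
    (s : Finset ℤ) (hs : ∀ j ∈ s, j < 0)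
    (A M : ℤ → Grass)
    (hA : ∀ j, A j ∈ CliffordAlgebra.evenOdd (0 : QuadraticForm ℂ (ℕ →₀ ℂ)) 0)
    (hM : ∀ j, M j ∈ CliffordAlgebra.evenOdd (0 : QuadraticForm ℂ (ℕ →₀ ℂ)) 1)
    (h0 h1 : GLP)
    (hh0 : h0 = ∑ j ∈ s, (((j : ℂ) + 1) / 2) • gsingle j (A j))
    (hh1 : h1 = ∑ j ∈ s, ((j : ℂ) + 1) • gsingle j (M j)) :
    ∀ F : GLP × GLP,
      Dop (Tsc s A M F) - Tsc s A M (Dop F)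
        = (h0 * F.2, h0 * glpder F.1 + h1 * F.2) :=
  commutator_D_T_eq_h_D_general s A M h0 h1 hh0 hh1

end
end

section
/- In the Verma module M(c,h) of the N=1 Neveu-Schwarz superconformal algebra, the level-2 vector (L_{−2} + a L_{−1}² + b G_{−3/2}G_{−1/2})|c,h⟩ is singular (annihilated by G_{1/2} and G_{3/2}) when c = (3/2)(1 − 16h/3), a = −3/(4h), and b = 3/(4h), for h ≠ 0. -/
/- N=1 Neveu-Schwarz superconformal algebra: even L n, odd G encoded with integer
indices (`G a` stands for G_{a+1/2}), central C, with relations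
  [L_m, L_n] = (m−n)L_{m+n} + ((m³−m)/12)δ_{m+n,0} C,
  [G_{m+1/2}, L_n] = (m − (n−1)/2) G_{m+n+1/2},
  {G_{a+1/2}, G_{b+1/2}} = 2L_{a+b+1} + ((a²+a)/3)δ_{a+b+1,0} C.
For the highest weight vector v = |c,h⟩ (C v = c v, L₀ v = h v, L_n v = 0 and
G_{n−1/2} v = 0 for n > 0) with h ≠ 0, c = (3/2)(1 − 16h/3), a = −3/(4h),
b = 3/(4h), the level-2 vector w = (L_{−2} + a L_{−1}² + b G_{−3/2}G_{−1/2}) v is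
singular: G_{1/2} w = 0 and G_{3/2} w = 0. -/
theorem ns1_level_two_even_singular_vector
    (V : Type*) [AddCommGroup V] [Module ℂ V]
    (L : ℤ → Module.End ℂ V) (G : ℤ → Module.End ℂ V) (C : Module.End ℂ V)
    (hLL : ∀ m n : ℤ, L m * L n - L n * L m
      = ((m : ℂ) - (n : ℂ)) • L (m + n)
        + (if m + n = 0 then ((m : ℂ) ^ 3 - (m : ℂ)) / 12 else 0) • C)
    (hGL : ∀ m n : ℤ, G m * L n - L n * G m
      = ((m : ℂ) - ((n : ℂ) - 1) / 2) • G (m + n))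
    (hGG : ∀ a b : ℤ, G a * G b + G b * G a
      = (2 : ℂ) • L (a + b + 1)
        + (if a + b + 1 = 0 then ((a : ℂ) ^ 2 + (a : ℂ)) / 3 else 0) • C)
    (hCL : ∀ n : ℤ, C * L n = L n * C)
    (hCG : ∀ n : ℤ, C * G n = G n * C)
    (c h : ℂ) (hh : h ≠ 0)
    (hc : c = (3 / 2) * (1 - 16 * h / 3))
    (v : V)
    (hCv : C v = c • v)
    (hL0v : L 0 v = h • v)
    (hLann : ∀ n : ℤ, 0 < n → L n v = 0)
    (hGann : ∀ a : ℤ, 0 ≤ a → G a v = 0)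
    (w : V)
    (hw : w = L (-2) v + (-(3 / (4 * h))) • L (-1) (L (-1) v)
      + (3 / (4 * h)) • G (-2) (G (-1) v)) :
    G 0 w = 0 ∧ G 1 w = 0 := by

  have cGL : ∀ (m n : ℤ) (x : V), G m (L n x)
      = L n (G m x) + ((m : ℂ) - ((n : ℂ) - 1) / 2) • G (m + n) x := by
    intro m n x
    have e := LinearMap.congr_fun (hGL m n) x
    simp only [LinearMap.sub_apply, Module.End.mul_apply, LinearMap.smul_apply] at e
    rw [sub_eq_iff_eq_add] at e
    rw [e]; abel
  have cGG : ∀ (a b : ℤ) (x : V), G a (G b x)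
      = -(G b (G a x)) + (2 : ℂ) • L (a + b + 1) x
        + (if a + b + 1 = 0 then ((a : ℂ) ^ 2 + (a : ℂ)) / 3 else 0) • C x := by
    intro a b x
    have e := LinearMap.congr_fun (hGG a b) x
    simp only [LinearMap.add_apply, Module.End.mul_apply, LinearMap.smul_apply] at e
    rw [add_comm (G a ((G b) x)), ← eq_sub_iff_add_eq] at e
    rw [e]; abel
  have cCG : ∀ (n : ℤ) (x : V), C (G n x) = G n (C x) := by
    intro n x
    have e := LinearMap.congr_fun (hCG n) x
    simpa using e
  have hG0v : G 0 v = 0 := hGann 0 le_rfl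
  have hG1v : G 1 v = 0 := hGann 1 (by norm_num)
  have hL1v : L 1 v = 0 := hLann 1 (by norm_num)
  -- G 0 pieces
  have t1 : G 0 (L (-2) v) = (3 / 2 : ℂ) • G (-2) v := by
    have e := cGL 0 (-2) v
    norm_num [hG0v, map_zero] at e
    linear_combination (norm := module) e
  have g0l1 : G 0 (L (-1) v) = G (-1) v := by
    have e := cGL 0 (-1) v
    norm_num [hG0v, map_zero] at e
    linear_combination (norm := module) e
  have gm1l1 : G (-1) (L (-1) v) = L (-1) (G (-1) v) := by
    have e := cGL (-1) (-1) v
    norm_num at e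
    linear_combination (norm := module) e
  have t2 : G 0 (L (-1) (L (-1) v)) = (2 : ℂ) • L (-1) (G (-1) v) := by
    have e := cGL 0 (-1) (L (-1) v)
    norm_num [g0l1, gm1l1] at e
    linear_combination (norm := module) e
  have g0gm1 : G 0 (G (-1) v) = (2 : ℂ) • h • v := by
    have e := cGG 0 (-1) v
    norm_num [hG0v, hL0v, map_zero] at e
    linear_combination (norm := module) e
  have t3 : G 0 (G (-2) (G (-1) v))
      = -((2 : ℂ) • h • G (-2) v) + (2 : ℂ) • L (-1) (G (-1) v) := by
    have e := cGG 0 (-2) (G (-1) v)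
    norm_num [g0gm1, map_smul] at e
    linear_combination (norm := module) e
  -- G 1 pieces
  have s1 : G 1 (L (-2) v) = (5 / 2 : ℂ) • G (-1) v := by
    have e := cGL 1 (-2) v
    norm_num [hG1v, map_zero] at e
    linear_combination (norm := module) e
  have g1l1 : G 1 (L (-1) v) = 0 := by
    have e := cGL 1 (-1) v
    norm_num [hG1v, hG0v, map_zero] at e
    linear_combination (norm := module) e
  have s2 : G 1 (L (-1) (L (-1) v)) = (2 : ℂ) • G (-1) v := by
    have e := cGL 1 (-1) (L (-1) v)
    norm_num [g1l1, g0l1, map_zero] at e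
    linear_combination (norm := module) e
  have g1gm1 : G 1 (G (-1) v) = 0 := by
    have e := cGG 1 (-1) v
    norm_num [hG1v, hL1v, map_zero] at e
    linear_combination (norm := module) e
  have l0gm1 : L 0 (G (-1) v) = (h + 1 / 2 : ℂ) • G (-1) v := by
    have e := cGL (-1) 0 v
    norm_num [hL0v, map_smul] at e
    linear_combination (norm := module) -e
  have cgm1 : C (G (-1) v) = c • G (-1) v := by
    rw [cCG, hCv, map_smul]
  have s3 : G 1 (G (-2) (G (-1) v))
      = (2 : ℂ) • (h + 1 / 2 : ℂ) • G (-1) v + ((2 : ℂ) / 3) • c • G (-1) v := by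
    have e := cGG 1 (-2) (G (-1) v)
    norm_num [g1gm1, l0gm1, cgm1, map_zero] at e
    linear_combination (norm := module) e
  constructor
  · rw [hw, map_add, map_add, map_smul, map_smul, t1, t2, t3]
    match_scalars
    · field_simp
      ring
    · ring
  · rw [hw, map_add, map_add, map_smul, map_smul, s1, s2, s3, hc]
    match_scalars
    field_simp
    ring
end

section
/- For every formal power series ρ(z) = b₁z + b₀ + b_{−1}z^{−1} + ⋯ with b₁ ≠ 0, there exist unique coefficients v_i (i ≤ 0), with v₀ = b₁ ≠ 0, such that exp(Σ_{i<0} v_i z^{i+1}∂_z) v₀^{z∂_z} · z = ρ(z); moreover ρ lies in Aut₊𝒪 (i.e., b₁ = 1) if and only if v₀ = 1. -/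
/- Aut 𝒪 as formal series at infinity: ρ(z) = b₁z + b₀ + b₋₁z^{−1} + ⋯ is encoded
by its coefficients b : ℕ → ℂ, b n being the coefficient of z^{1−n}, with b 0 = b₁ ≠ 0.
The data (v_i)_{i<0} is encoded by v : ℕ → ℂ with v m ↔ v_{−m} for m ≥ 1 and
v 0 ↔ v₀.  The derivation D = Σ_{i<0} v_i z^{i+1}∂_z acts on coefficient functions
(z^{i+1}∂_z sends z^{1−j} to (1−j) z^{1−j+i}), and the expression
exp(D) v₀^{z∂_z} · z is well defined since its n-th coefficient only involves
D^k for k ≤ n.  The claim: for every ρ (i.e. every b with b 0 ≠ 0) there exist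
unique coefficients v with v 0 = b 0 such that exp(D)(v₀ z) = ρ(z); moreover any
such v has v 0 = 1 iff b 0 = 1 (i.e. iff ρ ∈ Aut₊𝒪). -/

noncomputable section

/-- D = Σ_{i<0} v_i z^{i+1}∂_z acting on the coefficients (f n = coeff of z^{1−n}). -/
def Dinf (v : ℕ → ℂ) (f : ℕ → ℂ) : ℕ → ℂ := fun n =>
  ∑ m ∈ Finset.Icc 1 n, v m * ((1 : ℂ) - ((n - m : ℕ) : ℂ)) * f (n - m)

/-- exp(D) f, coefficientwise (the sum over k is finite: D^k f vanishes in degree n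
for k > n). -/
def expDinf (v : ℕ → ℂ) (f : ℕ → ℂ) : ℕ → ℂ := fun n =>
  ∑ k ∈ Finset.range (n + 1), (1 / (Nat.factorial k : ℂ)) * ((Dinf v)^[k] f n)

/-- v₀^{z∂_z} · z = v₀ z, as a coefficient function. -/
def v0z (v : ℕ → ℂ) : ℕ → ℂ := fun n => if n = 0 then v 0 else 0

lemma Dinf_apply (v f : ℕ → ℂ) (n : ℕ) :
    Dinf v f n = ∑ m ∈ Finset.Icc 1 n, v m * ((1 : ℂ) - ((n - m : ℕ) : ℂ)) * f (n - m) := rfl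

lemma Dinf_zero (v f : ℕ → ℂ) : Dinf v f 0 = 0 := by simp [Dinf_apply]

lemma iterate_Dinf_zero (v f : ℕ → ℂ) (k : ℕ) (hk : 1 ≤ k) :
    (Dinf v)^[k] f 0 = 0 := by
  cases k with
  | zero => omega
  | succ k => rw [Function.iterate_succ_apply', Dinf_zero]

lemma Dinf_congr (v w f g : ℕ → ℂ) (n : ℕ) (hv : ∀ m, 1 ≤ m → m ≤ n → v m = w m)
    (hf : ∀ m < n, f m = g m) : Dinf v f n = Dinf w g n := by
  rw [Dinf_apply, Dinf_apply]
  refine Finset.sum_congr rfl fun m hm => ?_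
  simp only [Finset.mem_Icc] at hm
  rw [hv m hm.1 hm.2, hf (n - m) (by omega)]

lemma iterate_congr (N : ℕ) (v w f g : ℕ → ℂ) (hv : ∀ m ≤ N, v m = w m)
    (hf : ∀ m ≤ N, f m = g m) :
    ∀ k, ∀ n ≤ N, (Dinf v)^[k] f n = (Dinf w)^[k] g n := by
  intro k
  induction k with
  | zero => simpa using hf
  | succ k ih =>
    intro n hn
    rw [Function.iterate_succ_apply', Function.iterate_succ_apply']
    exact Dinf_congr v w _ _ n (fun m _ hm => hv m (le_trans hm hn))
      (fun m hm => ih m (by omega))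

lemma expDinf_congr (N : ℕ) (v w f g : ℕ → ℂ) (hv : ∀ m ≤ N, v m = w m)
    (hf : ∀ m ≤ N, f m = g m) : ∀ n ≤ N, expDinf v f n = expDinf w g n := by
  intro n hn
  unfold expDinf
  exact Finset.sum_congr rfl fun k _ => by
    rw [iterate_congr N v w f g hv hf k n hn]

lemma expDinf_zero (v f : ℕ → ℂ) : expDinf v f 0 = f 0 := by simp [expDinf]

lemma Dinf_update (v f : ℕ → ℂ) (n : ℕ) (hn : 1 ≤ n) :
    Dinf v f n = v n * f 0 + Dinf (Function.update v n 0) f n := by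
  rw [Dinf_apply, Dinf_apply]
  have key : ∀ m ∈ Finset.Icc 1 n,
      v m * ((1:ℂ) - ((n-m : ℕ) : ℂ)) * f (n-m)
      = (if m = n then v n * f 0 else 0)
        + Function.update v n 0 m * ((1:ℂ) - ((n-m : ℕ) : ℂ)) * f (n-m) := by
    intro m hm
    by_cases h : m = n
    · subst h; simp
    · rw [if_neg h, Function.update_of_ne h, zero_add]
  rw [Finset.sum_congr rfl key, Finset.sum_add_distrib,
    Finset.sum_ite_eq' (Finset.Icc 1 n) n (fun _ => v n * f 0),
    if_pos (Finset.mem_Icc.mpr ⟨hn, le_refl n⟩)]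

lemma iterate_update (v f : ℕ → ℂ) (n : ℕ) (hn : 1 ≤ n) (k : ℕ) (hk : 2 ≤ k) :
    (Dinf v)^[k] f n = (Dinf (Function.update v n 0))^[k] f n := by
  obtain ⟨k', rfl⟩ : ∃ k', k = k' + 1 := ⟨k - 1, by omega⟩
  have hk1 : 1 ≤ k' := by omega
  rw [Function.iterate_succ_apply', Function.iterate_succ_apply',
    Dinf_apply, Dinf_apply]
  refine Finset.sum_congr rfl fun m hm => ?_
  simp only [Finset.mem_Icc] at hm
  by_cases h : m = n
  · rw [h, Nat.sub_self, iterate_Dinf_zero v f k' hk1,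
      iterate_Dinf_zero (Function.update v n 0) f k' hk1]
    ring
  · rw [Function.update_of_ne h]
    congr 1
    exact iterate_congr (n-1) v (Function.update v n 0) f f
      (fun m' hm' => (Function.update_of_ne (by omega) _ _).symm)
      (fun _ _ => rfl) k' (n - m) (by omega)

lemma expDinf_update (v f : ℕ → ℂ) (n : ℕ) (hn : 1 ≤ n) :
    expDinf v f n = v n * f 0 + expDinf (Function.update v n 0) f n := by
  unfold expDinf
  have key : ∀ k ∈ Finset.range (n+1),
      (1 / (Nat.factorial k : ℂ)) * ((Dinf v)^[k] f n)
      = (if k = 1 then v n * f 0 else 0)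
        + (1 / (Nat.factorial k : ℂ)) * ((Dinf (Function.update v n 0))^[k] f n) := by
    intro k _
    match k with
    | 0 => simp
    | 1 =>
      rw [Function.iterate_one, Function.iterate_one, Dinf_update v f n hn,
        if_pos rfl]
      norm_num
    | (k+2) =>
      rw [iterate_update v f n hn (k+2) (by omega), if_neg (by omega), zero_add]
  rw [Finset.sum_congr rfl key, Finset.sum_add_distrib,
    Finset.sum_ite_eq' (Finset.range (n+1)) 1 (fun _ => v n * f 0),
    if_pos (Finset.mem_range.mpr (by omega))]

def trunc (v : ℕ → ℂ) (n : ℕ) : ℕ → ℂ := fun m => if m < n then v m else 0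

lemma main_step (v : ℕ → ℂ) (n : ℕ) (hn : 1 ≤ n) :
    expDinf v (v0z v) n
      = v n * v 0 + expDinf (trunc v n) (v0z (trunc v n)) n := by
  rw [expDinf_update v (v0z v) n hn]
  have h2 : expDinf (Function.update v n 0) (v0z v) n
      = expDinf (trunc v n) (v0z (trunc v n)) n := by
    refine expDinf_congr n (Function.update v n 0) (trunc v n) (v0z v)
      (v0z (trunc v n)) ?_ ?_ n le_rfl
    · intro m hm
      by_cases h : m = n
      · rw [h, Function.update_self]
        simp [trunc]
      · rw [Function.update_of_ne h]
        simp [trunc, lt_of_le_of_ne hm h]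
    · intro m _
      unfold v0z trunc
      by_cases h : m = 0 <;> simp [h, show 0 < n from hn]
  rw [h2]
  simp [v0z]

def vb (b : ℕ → ℂ) : ℕ → ℂ
  | 0 => b 0
  | (n+1) =>
    (b (n+1) - expDinf (fun m => if _ : m < n+1 then vb b m else 0)
        (v0z (fun m => if _ : m < n+1 then vb b m else 0)) (n+1)) / b 0

lemma vb_zero (b : ℕ → ℂ) : vb b 0 = b 0 := by rw [vb]

lemma trunc_vb (b : ℕ → ℂ) (n : ℕ) :
    (fun m => if _ : m < n+1 then vb b m else 0) = trunc (vb b) (n+1) := by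
  funext m
  simp [trunc]

lemma vb_succ (b : ℕ → ℂ) (n : ℕ) :
    vb b (n+1) = (b (n+1)
      - expDinf (trunc (vb b) (n+1)) (v0z (trunc (vb b) (n+1))) (n+1)) / b 0 := by
  rw [vb, trunc_vb]

lemma vb_spec (b : ℕ → ℂ) (hb : b 0 ≠ 0) :
    expDinf (vb b) (v0z (vb b)) = b := by
  funext n
  match n with
  | 0 => rw [expDinf_zero]; simp [v0z, vb_zero]
  | (n+1) =>
    rw [main_step (vb b) (n+1) (by omega), vb_succ, vb_zero,
      div_mul_cancel₀ _ hb]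
    ring

lemma vb_unique (b : ℕ → ℂ) (hb : b 0 ≠ 0) (v : ℕ → ℂ)
    (h0 : v 0 = b 0) (he : expDinf v (v0z v) = b) : v = vb b := by
  funext n
  induction n using Nat.strong_induction_on with
  | _ n ih =>
    match n with
    | 0 => rw [h0, vb_zero]
    | (n+1) =>
      have h1 := congrFun he (n+1)
      rw [main_step v (n+1) (by omega)] at h1
      have htr : trunc v (n+1) = trunc (vb b) (n+1) := by
        funext m
        unfold trunc
        split_ifs with h
        · exact ih m (by omega)
        · rfl
      rw [htr, h0] at h1
      rw [vb_succ]
      field_simp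
      linear_combination h1

theorem exp_coordinates_exist_unique (b : ℕ → ℂ) (hb : b 0 ≠ 0) :
    (∃! v : ℕ → ℂ, v 0 = b 0 ∧ expDinf v (v0z v) = b) ∧
    (∀ v : ℕ → ℂ, v 0 = b 0 ∧ expDinf v (v0z v) = b → (b 0 = 1 ↔ v 0 = 1)) := by
  constructor
  · exact ⟨vb b, ⟨vb_zero b, vb_spec b hb⟩, fun v hv => vb_unique b hb v hv.1 hv.2⟩
  · rintro v ⟨h0, -⟩
    rw [h0]


end
end
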